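/- Fix q ∈ (2,4), α > 0 and μ > 0, and let u ∈ X_μ satisfy Ẽ_{q,α}(u) = 𝓔̃_{q,α}(μ) < 0. Then there exists λ ∈ ℝ such that: u is twice continuously differentiable on (0,1) and on (1,∞) and (g(x)u'(x))' = λ g(x) u(x) for every x ∈ (0,1) ∪ (1,∞); moreover the right derivative u'(0⁺) exists and 4 u'(0⁺) = −α |u(0)|^{q−2} u(0). -/

import Mathlib

open MeasureTheory Set

/-- The weight `g(x) = 4` for `x ≤ 1` and `g(x) = 4(2x−1)` for `x > 1`. -/
noncomputable def g (x : ℝ) : ℝ := if x ≤ 1 then 4 else 4 * (2 * x - 1)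

/-- `u` belongs to the weighted Sobolev space `H¹(ℝ⁺, g dx)` with derivative
`u'`: it is locally absolutely continuous on `[0,∞)` (primitive of `u'`) and
both `u² g` and `u'² g` are integrable on `(0,∞)`. -/
def InH1g (u u' : ℝ → ℝ) : Prop :=
  IntegrableOn (fun x => (u x) ^ 2 * g x) (Ioi 0) ∧
    IntegrableOn (fun x => (u' x) ^ 2 * g x) (Ioi 0) ∧
    ∀ a b : ℝ, 0 ≤ a → 0 ≤ b → u b - u a = ∫ x in a..b, u' x

/-- The weighted mass `∫₀^∞ u² g dx`. -/
noncomputable def massg (u : ℝ → ℝ) : ℝ := ∫ x in Ioi (0 : ℝ), (u x) ^ 2 * g x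

/-- The reduced energy `Ẽ_{q,α}(u) = (1/2)∫₀^∞ u'² g dx − (α/q)|u(0)|^q`. -/
noncomputable def energyg (q α : ℝ) (u u' : ℝ → ℝ) : ℝ :=
  (1 / 2) * (∫ x in Ioi (0 : ℝ), (u' x) ^ 2 * g x) - (α / q) * |u 0| ^ q

/-- The set of reduced energies over `X_μ = {u : 0 < ∫ u² g ≤ μ}`;
its infimum is `𝓔̃_{q,α}(μ)`. -/
def levelSetg (q α μ : ℝ) : Set ℝ :=
  {E | ∃ u u' : ℝ → ℝ, InH1g u u' ∧ 0 < massg u ∧ massg u ≤ μ ∧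
    E = energyg q α u u'}

/-!
Perturbing the minimizer `u` to `u + t φ` and rescaling back to mass `m = ∫ u² g` gives
admissible competitors whose energy is an explicit smooth function of `t` with a minimum at
`t = 0`. Its vanishing derivative is the weak Euler–Lagrange equation
`∫ g u' φ' = λ ∫ g u φ + β φ(0)`, with `λ = (∫ g u'² - α |u 0|^q) / m` and
`β = α |u 0|^(q-2) u 0`. Testing it against the `g`-harmonic function `ψ_b` with
`g ψ_b' = -1` on `(0, b)` and `ψ_b = 0` on `[b, ∞)` gives the representation
`u b = u 0 - ∫₀ᵇ (λ ∫₀ˢ g u + β) / g`, from which the regularity of `u`, the equation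
`(g u')' = -λ g u` and the boundary condition `4 u'(0⁺) = -β` follow by the fundamental
theorem of calculus.
-/

open Filter Topology

lemma add_mul_sq_mul_eq {X : Type*} (w f₁ f₂ : X → ℝ) (t : ℝ) :
    (fun x => (f₁ x + t * f₂ x) ^ 2 * w x) =
      fun x => f₁ x ^ 2 * w x + (2 * t * (f₁ x * f₂ x * w x) + t ^ 2 * (f₂ x ^ 2 * w x)) := by
  ext x; ring

section WeightedSquares

variable {X : Type*} [MeasurableSpace X] {ν : Measure X} {w f₁ f₂ : X → ℝ}

lemma Integrable.add_mul_sq_mul (h₁ : Integrable (fun x => f₁ x ^ 2 * w x) ν)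
    (h₁₂ : Integrable (fun x => f₁ x * f₂ x * w x) ν) (h₂ : Integrable (fun x => f₂ x ^ 2 * w x) ν)
    (t : ℝ) : Integrable (fun x => (f₁ x + t * f₂ x) ^ 2 * w x) ν := by
  rw [add_mul_sq_mul_eq]
  exact h₁.add ((h₁₂.const_mul _).add (h₂.const_mul _))

lemma integral_add_mul_sq_mul (h₁ : Integrable (fun x => f₁ x ^ 2 * w x) ν)
    (h₁₂ : Integrable (fun x => f₁ x * f₂ x * w x) ν) (h₂ : Integrable (fun x => f₂ x ^ 2 * w x) ν)
    (t : ℝ) :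
    ∫ x, (f₁ x + t * f₂ x) ^ 2 * w x ∂ν =
      ∫ x, f₁ x ^ 2 * w x ∂ν + 2 * t * ∫ x, f₁ x * f₂ x * w x ∂ν
        + t ^ 2 * ∫ x, f₂ x ^ 2 * w x ∂ν := by
  have h : Integrable (fun x => 2 * t * (f₁ x * f₂ x * w x) + t ^ 2 * (f₂ x ^ 2 * w x)) ν :=
    (h₁₂.const_mul _).add (h₂.const_mul _)
  rw [add_mul_sq_mul_eq, integral_add h₁ h, integral_add (h₁₂.const_mul _) (h₂.const_mul _),
    integral_const_mul, integral_const_mul, add_assoc]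

end WeightedSquares

lemma hasDerivAt_rescaledEnergy {q α m A B K K₁ K₂ a b : ℝ} (hq : 1 < q) (hm : m ≠ 0) :
    HasDerivAt (fun t => m / (m + 2 * A * t + B * t ^ 2) * ((1 / 2) * (K + 2 * K₁ * t + K₂ * t ^ 2))
        - α / q * ((m / (m + 2 * A * t + B * t ^ 2)) ^ (q / 2) * |a + b * t| ^ q))
      (K₁ - A / m * (K - α * |a| ^ q) - α * |a| ^ (q - 2) * a * b) 0 := by
  have hquad : ∀ c₀ c₁ c₂ : ℝ, HasDerivAt (fun t => c₀ + 2 * c₁ * t + c₂ * t ^ 2) (2 * c₁) 0 :=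
    fun c₀ c₁ c₂ => ((((hasDerivAt_id (0 : ℝ)).const_mul (2 * c₁)).const_add c₀).add
        ((hasDerivAt_pow 2 (0 : ℝ)).const_mul c₂)).congr_deriv (by simp)
  have hratio : HasDerivAt (fun t => m / (m + 2 * A * t + B * t ^ 2)) (-(2 * A) / m) 0 :=
    ((hasDerivAt_const (0 : ℝ) m).div (hquad m A B) (by simpa using hm)).congr_deriv
      (by simp; field_simp)
  have hpow : HasDerivAt (fun t => (m / (m + 2 * A * t + B * t ^ 2)) ^ (q / 2))
      (-(2 * A) / m * (q / 2)) 0 :=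
    (hratio.rpow_const (p := q / 2) (by left; simp [hm])).congr_deriv (by simp [hm])
  have habs : HasDerivAt (fun t => |a + b * t| ^ q) (q * |a| ^ (q - 2) * a * b) 0 :=
    ((hasDerivAt_abs_rpow a hq).comp_of_eq (0 : ℝ)
      (((hasDerivAt_id (0 : ℝ)).const_mul b).const_add a) (by simp)).congr_deriv (by simp)
  refine ((hratio.mul ((hquad K K₁ K₂).const_mul (1 / 2))).sub
    ((hpow.mul habs).const_mul (α / q))).congr_deriv ?_
  simp [hm]
  field_simp
  ring

lemma continuous_g : Continuous g :=
  Continuous.if_le continuous_const (by fun_prop) continuous_id continuous_const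
    (fun x hx => by rw [hx]; norm_num)

lemma four_le_g (x : ℝ) : 4 ≤ g x := by
  unfold g
  split_ifs with h
  · exact le_rfl
  · linarith [not_le.mp h]

lemma g_pos (x : ℝ) : 0 < g x := by linarith [four_le_g x]

lemma g_zero : g 0 = 4 := if_pos zero_le_one

lemma contDiffOn_g_Iio (n : WithTop ℕ∞) : ContDiffOn ℝ n g (Iio 1) :=
  contDiffOn_const.congr fun _ hx => if_pos (le_of_lt hx)

lemma contDiffOn_g_Ioi (n : WithTop ℕ∞) : ContDiffOn ℝ n g (Ioi 1) :=
  (by fun_prop : ContDiff ℝ n fun x : ℝ => 4 * (2 * x - 1)).contDiffOn.congr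
    fun _ hx => if_neg (not_le.mpr hx)

namespace InH1g

variable {u u' φ φ' : ℝ → ℝ}

lemma eq_of_not_integrableOn (hu : InH1g u u') {b c : ℝ} (hc : 0 ≤ c) (hbc : b ≤ c)
    (h : ¬ IntegrableOn u' (Ioc 0 b)) : u c = u 0 := by
  have hc' : ¬ IntegrableOn u' (Ioc 0 c) := fun h' => h (h'.mono_set (Ioc_subset_Ioc_right hbc))
  have := hu.2.2 0 c le_rfl hc
  rw [intervalIntegral.integral_of_le hc, integral_undef hc'] at this
  linarith

/-- Without measurability of `u'`, the identity `u b - u a = ∫ u'` only says that `u` is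
eventually constant; this is excluded by `∫ u² g < ∞` as soon as `u 0 ≠ 0`. -/
lemma aestronglyMeasurable (hu : InH1g u u') (hu0 : u 0 ≠ 0) (b : ℝ) :
    AEStronglyMeasurable u' (volume.restrict (Ioc 0 b)) := by
  by_contra h
  have hconst : ∀ x ∈ Ioi (max b 0), u x = u 0 := fun x hx =>
    hu.eq_of_not_integrableOn (le_max_right b 0 |>.trans hx.le) (le_max_left b 0 |>.trans hx.le)
      fun hi => h hi.aestronglyMeasurable
  have hint : IntegrableOn (fun _ => 4 * u 0 ^ 2) (Ioi (max b 0)) := by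
    refine (hu.1.mono_set (Ioi_subset_Ioi (le_max_right b 0))).mono' aestronglyMeasurable_const ?_
    filter_upwards [ae_restrict_mem measurableSet_Ioi] with x hx
    rw [Real.norm_eq_abs, abs_of_nonneg (by positivity), ← hconst x hx]
    exact mul_comm (4 : ℝ) _ ▸ mul_le_mul_of_nonneg_left (four_le_g x) (sq_nonneg _)
  rw [integrableOn_const_iff, Real.volume_Ioi] at hint
  simp_all

lemma integrableOn_Ioc (hu : InH1g u u') (hu0 : u 0 ≠ 0) (b : ℝ) :
    IntegrableOn u' (Ioc 0 b) := by
  refine Integrable.mono' ((hu.2.1.mono_set Ioc_subset_Ioi_self).add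
    (integrableOn_const (C := (1 : ℝ)) measure_Ioc_lt_top.ne)) (hu.aestronglyMeasurable hu0 b) ?_
  filter_upwards with x
  rw [Real.norm_eq_abs, Pi.add_apply]
  nlinarith [sq_nonneg (|u' x| - 1), sq_abs (u' x),
    mul_le_mul_of_nonneg_left (four_le_g x) (sq_nonneg (u' x))]

lemma intervalIntegrable (hu : InH1g u u') (hu0 : u 0 ≠ 0) {a b : ℝ} (ha : 0 ≤ a) (hb : 0 ≤ b) :
    IntervalIntegrable u' volume a b := by
  rw [intervalIntegrable_iff, uIoc]
  exact (hu.integrableOn_Ioc hu0 (max a b)).mono_set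
    (Ioc_subset_Ioc (le_min ha hb) le_rfl)

lemma continuousOn (hu : InH1g u u') (hu0 : u 0 ≠ 0) : ContinuousOn u (Ici 0) := by
  have hprim : ContinuousOn (fun x => u 0 + ∫ t in (0 : ℝ)..x, u' t) (Ici 0) := by
    intro x hx
    have hx1 : (0 : ℝ) ≤ x + 1 := by linarith [mem_Ici.mp hx]
    have hIcc : Icc 0 (x + 1) ∈ 𝓝[Ici 0] x :=
      inter_mem self_mem_nhdsWithin (mem_nhdsWithin_of_mem_nhds (Iic_mem_nhds (by linarith)))
    have := intervalIntegral.continuousOn_primitive_interval'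
      (hu.intervalIntegrable hu0 le_rfl hx1) left_mem_uIcc x
      (by rw [uIcc_of_le hx1]; exact ⟨hx, by linarith⟩)
    rw [uIcc_of_le hx1] at this
    exact (this.mono_of_mem_nhdsWithin hIcc).const_add _
  exact hprim.congr fun x hx => by linarith [hu.2.2 0 x le_rfl hx]

lemma continuous_comp_max (hu : InH1g u u') (hu0 : u 0 ≠ 0) : Continuous fun x => u (max x 0) :=
  (hu.continuousOn hu0).comp_continuous (continuous_id.max continuous_const) fun x =>
    le_max_right x 0

lemma const_mul (hu : InH1g u u') (c : ℝ) : InH1g (fun x => c * u x) (fun x => c * u' x) := by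
  refine ⟨?_, ?_, fun a b ha hb => ?_⟩
  · simp only [mul_pow, mul_assoc]
    exact hu.1.const_mul (c ^ 2)
  · simp only [mul_pow, mul_assoc]
    exact hu.2.1.const_mul (c ^ 2)
  · rw [intervalIntegral.integral_const_mul, ← hu.2.2 a b ha hb]
    ring

lemma add_mul (hu : InH1g u u') (hφ : InH1g φ φ')
    (hu' : ∀ a b : ℝ, 0 ≤ a → 0 ≤ b → IntervalIntegrable u' volume a b)
    (hφ' : ∀ a b : ℝ, 0 ≤ a → 0 ≤ b → IntervalIntegrable φ' volume a b)
    (huφ : IntegrableOn (fun x => u x * φ x * g x) (Ioi 0))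
    (hu'φ' : IntegrableOn (fun x => u' x * φ' x * g x) (Ioi 0)) (t : ℝ) :
    InH1g (fun x => u x + t * φ x) (fun x => u' x + t * φ' x) := by
  refine ⟨Integrable.add_mul_sq_mul hu.1 huφ hφ.1 t,
    Integrable.add_mul_sq_mul hu.2.1 hu'φ' hφ.2.1 t, fun a b ha hb => ?_⟩
  rw [intervalIntegral.integral_add (hu' a b ha hb) ((hφ' a b ha hb).const_mul t),
    intervalIntegral.integral_const_mul, ← hu.2.2 a b ha hb, ← hφ.2.2 a b ha hb]
  ring

end InH1g

lemma massg_const_mul (c : ℝ) (u : ℝ → ℝ) : massg (fun x => c * u x) = c ^ 2 * massg u := by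
  simp only [massg, mul_pow, mul_assoc, integral_const_mul]

/-- The right-hand side is the energy of `√(m / massg v) * v`, which has mass `m`. -/
lemma sInf_levelSetg_le {q α μ m : ℝ} (hbdd : BddBelow (levelSetg q α μ)) {v v' : ℝ → ℝ}
    (hv : InH1g v v') (hv0 : 0 < massg v) (hm0 : 0 < m) (hm : m ≤ μ) :
    sInf (levelSetg q α μ) ≤ m / massg v * ((1 / 2) * ∫ x in Ioi (0 : ℝ), v' x ^ 2 * g x)
      - α / q * ((m / massg v) ^ (q / 2) * |v 0| ^ q) := by
  have hr : 0 ≤ m / massg v := by positivity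
  set c := √(m / massg v)
  have hc2 : c ^ 2 = m / massg v := Real.sq_sqrt hr
  have hcq : |c| ^ q = (m / massg v) ^ (q / 2) := by
    rw [abs_of_nonneg (Real.sqrt_nonneg _), Real.sqrt_eq_rpow, ← Real.rpow_mul hr]
    ring_nf
  have hmass : massg (fun x => c * v x) = m := by
    rw [massg_const_mul, hc2]
    field_simp
  calc sInf (levelSetg q α μ) ≤ energyg q α (fun x => c * v x) (fun x => c * v' x) :=
        csInf_le hbdd ⟨_, _, hv.const_mul c, hmass ▸ hm0, hmass ▸ hm, rfl⟩
    _ = _ := by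
        simp only [energyg, mul_pow, mul_assoc, integral_const_mul, abs_mul,
          Real.mul_rpow (abs_nonneg c) (abs_nonneg (v 0)), hcq, hc2]
        ring

theorem weak_euler_lagrange {q α μ : ℝ} (hq : 1 < q) {u u' : ℝ → ℝ} (hu : InH1g u u')
    (hu' : ∀ a b : ℝ, 0 ≤ a → 0 ≤ b → IntervalIntegrable u' volume a b) (hm0 : 0 < massg u) (hm : massg u ≤ μ)
    (hmin : energyg q α u u' = sInf (levelSetg q α μ)) (hbdd : BddBelow (levelSetg q α μ))
    {φ φ' : ℝ → ℝ} (hφ : InH1g φ φ')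
    (hφ' : ∀ a b : ℝ, 0 ≤ a → 0 ≤ b → IntervalIntegrable φ' volume a b)
    (huφ : IntegrableOn (fun x => u x * φ x * g x) (Ioi 0))
    (hu'φ' : IntegrableOn (fun x => u' x * φ' x * g x) (Ioi 0)) :
    ∫ x in Ioi (0 : ℝ), u' x * φ' x * g x =
      ((∫ x in Ioi (0 : ℝ), u' x ^ 2 * g x) - α * |u 0| ^ q) / massg u
          * (∫ x in Ioi (0 : ℝ), u x * φ x * g x) + α * |u 0| ^ (q - 2) * u 0 * φ 0 := by
  set m := massg u
  set A := ∫ x in Ioi (0 : ℝ), u x * φ x * g x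
  set B := ∫ x in Ioi (0 : ℝ), φ x ^ 2 * g x
  set K := ∫ x in Ioi (0 : ℝ), u' x ^ 2 * g x
  set K₁ := ∫ x in Ioi (0 : ℝ), u' x * φ' x * g x
  set K₂ := ∫ x in Ioi (0 : ℝ), φ' x ^ 2 * g x
  have hmass : ∀ t, massg (fun x => u x + t * φ x) = m + 2 * A * t + B * t ^ 2 := fun t => by
    rw [massg, integral_add_mul_sq_mul hu.1 huφ hφ.1]; simp only [m, massg]; ring
  have hkin : ∀ t, ∫ x in Ioi (0 : ℝ), (u' x + t * φ' x) ^ 2 * g x = K + 2 * K₁ * t + K₂ * t ^ 2 :=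
    fun t => by rw [integral_add_mul_sq_mul hu.2.1 hu'φ' hφ.2.1]; ring
  have hpos : ∀ᶠ t in 𝓝 (0 : ℝ), 0 < m + 2 * A * t + B * t ^ 2 :=
    (by fun_prop : Continuous fun t : ℝ => m + 2 * A * t + B * t ^ 2).continuousAt.eventually
      (lt_mem_nhds (by simpa using hm0))
  have hlocmin : IsLocalMin (fun t => m / (m + 2 * A * t + B * t ^ 2) *
      ((1 / 2) * (K + 2 * K₁ * t + K₂ * t ^ 2)) - α / q *
      ((m / (m + 2 * A * t + B * t ^ 2)) ^ (q / 2) * |u 0 + φ 0 * t| ^ q)) 0 := by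
    filter_upwards [hpos] with t ht
    have h := sInf_levelSetg_le hbdd
      (hu.add_mul hφ hu' hφ' huφ hu'φ' t) (hmass t ▸ ht) hm0 hm
    rw [hmass, hkin, ← hmin, mul_comm t] at h
    simpa [energyg, hm0.ne'] using h
  have h := hlocmin.hasDerivAt_eq_zero (hasDerivAt_rescaledEnergy hq hm0.ne')
  linear_combination h

lemma continuous_inv_g : Continuous fun t => (g t)⁻¹ :=
  continuous_g.inv₀ fun t => (g_pos t).ne'

noncomputable def gInvIntegral (x : ℝ) : ℝ := ∫ t in (0 : ℝ)..x, (g t)⁻¹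

lemma hasDerivAt_gInvIntegral (x : ℝ) : HasDerivAt gInvIntegral (g x)⁻¹ x :=
  (continuous_inv_g.integral_hasStrictDerivAt 0 x).hasDerivAt

lemma continuous_gInvIntegral : Continuous gInvIntegral :=
  continuous_iff_continuousAt.2 fun x => (hasDerivAt_gInvIntegral x).continuousAt

lemma gInvIntegral_zero : gInvIntegral 0 = 0 := intervalIntegral.integral_same

noncomputable def testFn (b x : ℝ) : ℝ := gInvIntegral b - gInvIntegral (min x b)

noncomputable def testFnDeriv (b x : ℝ) : ℝ := -(Ioc 0 b).indicator (fun t => (g t)⁻¹) x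

section TestFunction

variable {b : ℝ}

lemma continuous_testFn (b : ℝ) : Continuous (testFn b) :=
  continuous_const.sub (continuous_gInvIntegral.comp (continuous_id.min continuous_const))

lemma testFn_zero (hb : 0 ≤ b) : testFn b 0 = gInvIntegral b := by
  rw [testFn, min_eq_left hb, gInvIntegral_zero, sub_zero]

lemma testFn_of_le {x : ℝ} (h : b ≤ x) : testFn b x = 0 := by
  rw [testFn, min_eq_right h, sub_self]

lemma testFn_eq_zero_of_mem_diff {x : ℝ} (hx : x ∈ Ioi 0 \ Ioc 0 b) : testFn b x = 0 :=
  testFn_of_le (not_le.mp fun h => hx.2 ⟨hx.1, h⟩).le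

lemma integrable_testFnDeriv (b : ℝ) : Integrable (testFnDeriv b) :=
  ((integrable_indicator_iff measurableSet_Ioc).2 continuous_inv_g.integrableOn_Ioc).neg

lemma integral_testFnDeriv (hb : 0 ≤ b) {x : ℝ} (hx : 0 ≤ x) :
    ∫ t in (0 : ℝ)..x, testFnDeriv b t = -gInvIntegral (min x b) := by
  simp only [testFnDeriv]
  rw [intervalIntegral.integral_of_le hx, integral_neg, setIntegral_indicator measurableSet_Ioc,
    Ioc_inter_Ioc, max_self, ← intervalIntegral.integral_of_le (le_min hx hb), gInvIntegral]

lemma testFnDeriv_sq_mul_g (x : ℝ) :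
    testFnDeriv b x ^ 2 * g x = (Ioc 0 b).indicator (fun t => (g t)⁻¹) x := by
  by_cases hx : x ∈ Ioc 0 b
  · simp only [testFnDeriv, indicator_of_mem hx, neg_sq]
    field_simp [(g_pos x).ne']
  · simp [testFnDeriv, indicator_of_notMem hx]

lemma inH1g_testFn (hb : 0 ≤ b) : InH1g (testFn b) (testFnDeriv b) := by
  refine ⟨?_, ?_, fun x y hx hy => ?_⟩
  · exact (((continuous_testFn b).pow 2).mul continuous_g |>.integrableOn_Ioc (a := 0) (b := b)
      |>.of_forall_sdiff_eq_zero measurableSet_Ioi fun x hx => by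
        simp [testFn_eq_zero_of_mem_diff hx])
  · simp only [testFnDeriv_sq_mul_g]
    exact ((integrable_indicator_iff measurableSet_Ioc).2
      continuous_inv_g.integrableOn_Ioc).integrableOn
  · have hψ' : ∀ a c : ℝ, IntervalIntegrable (testFnDeriv b) volume a c :=
      fun _ _ => (integrable_testFnDeriv b).intervalIntegrable
    rw [← intervalIntegral.integral_interval_sub_left (hψ' 0 y) (hψ' 0 x),
      integral_testFnDeriv hb hx, integral_testFnDeriv hb hy, testFn, testFn]
    ring

variable {u u' w : ℝ → ℝ}

lemma mul_testFnDeriv_mul_g (f : ℝ → ℝ) :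
    (fun x => f x * testFnDeriv b x * g x) = fun x => -(Ioc 0 b).indicator f x := by
  ext x
  by_cases hx : x ∈ Ioc 0 b <;> simp [testFnDeriv, hx, (g_pos x).ne']

lemma integrableOn_mul_testFnDeriv_mul_g (hu' : IntegrableOn u' (Ioc 0 b)) :
    IntegrableOn (fun x => u' x * testFnDeriv b x * g x) (Ioi 0) := by
  rw [mul_testFnDeriv_mul_g]
  exact ((integrable_indicator_iff measurableSet_Ioc).2 hu').neg.integrableOn

lemma integral_mul_testFnDeriv_mul_g (hu : InH1g u u') (hb : 0 ≤ b) :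
    ∫ x in Ioi (0 : ℝ), u' x * testFnDeriv b x * g x = u 0 - u b := by
  rw [mul_testFnDeriv_mul_g, integral_neg, setIntegral_indicator measurableSet_Ioc,
    inter_eq_self_of_subset_right Ioc_subset_Ioi_self, ← intervalIntegral.integral_of_le hb,
    ← hu.2.2 0 b le_rfl hb, neg_sub]

lemma integrableOn_mul_testFn_mul_g (hw : Continuous w) (huw : EqOn u w (Ioi 0)) :
    IntegrableOn (fun x => u x * testFn b x * g x) (Ioi 0) :=
  ((hw.mul (continuous_testFn b)).mul continuous_g).integrableOn_Ioc (a := 0) (b := b)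
    |>.congr_fun (fun x hx => by simp only [Pi.mul_apply, huw (Ioc_subset_Ioi_self hx)])
      measurableSet_Ioc
    |>.of_forall_sdiff_eq_zero measurableSet_Ioi fun x hx => by
      simp [testFn_eq_zero_of_mem_diff hx]

lemma integral_mul_testFn_mul_g (hw : Continuous w) (huw : EqOn u w (Ioi 0)) (hb : 0 ≤ b) :
    ∫ x in Ioi (0 : ℝ), u x * testFn b x * g x =
      gInvIntegral b * (∫ x in (0 : ℝ)..b, w x * g x)
        - ∫ x in (0 : ℝ)..b, w x * g x * gInvIntegral x := by
  have hwg : Continuous fun x => w x * g x := hw.mul continuous_g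
  have h₁ : IntegrableOn (fun x => gInvIntegral b * (w x * g x)) (Ioc 0 b) :=
    hwg.integrableOn_Ioc.const_mul _
  have h₂ : IntegrableOn (fun x => w x * g x * gInvIntegral x) (Ioc 0 b) :=
    (hwg.mul continuous_gInvIntegral).integrableOn_Ioc
  rw [setIntegral_eq_of_subset_of_forall_sdiff_eq_zero measurableSet_Ioi
      (Ioc_subset_Ioi_self : Ioc (0 : ℝ) b ⊆ Ioi 0)
      fun x hx => by simp [testFn_eq_zero_of_mem_diff hx],
    intervalIntegral.integral_of_le hb, intervalIntegral.integral_of_le hb,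
    ← integral_const_mul, ← integral_sub h₁ h₂]
  refine setIntegral_congr_fun measurableSet_Ioc fun x hx => ?_
  simp only [testFn, min_eq_left hx.2, huw (Ioc_subset_Ioi_self hx)]
  ring

end TestFunction

/-- `c - ∫₀ˣ (lam ∫₀ˢ w g + β) / g ds`, integrated by parts so that no iterated integral
occurs. -/
noncomputable def profile (w : ℝ → ℝ) (c lam β x : ℝ) : ℝ :=
  c - lam * (gInvIntegral x * (∫ t in (0 : ℝ)..x, w t * g t)
    - ∫ t in (0 : ℝ)..x, w t * g t * gInvIntegral t) - β * gInvIntegral x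

section Profile

variable {w : ℝ → ℝ} {c lam β : ℝ}

lemma hasDerivAt_integral_mul_g (hw : Continuous w) (x : ℝ) :
    HasDerivAt (fun y => ∫ t in (0 : ℝ)..y, w t * g t) (w x * g x) x :=
  ((hw.mul continuous_g).integral_hasStrictDerivAt 0 x).hasDerivAt

lemma hasDerivAt_profile (hw : Continuous w) (x : ℝ) :
    HasDerivAt (profile w c lam β) (-(lam * (∫ t in (0 : ℝ)..x, w t * g t) + β) / g x) x := by
  have hR : HasDerivAt (fun y => ∫ t in (0 : ℝ)..y, w t * g t * gInvIntegral t)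
      (w x * g x * gInvIntegral x) x :=
    (((hw.mul continuous_g).mul continuous_gInvIntegral).integral_hasStrictDerivAt 0 x).hasDerivAt
  refine ((((hasDerivAt_gInvIntegral x).mul (hasDerivAt_integral_mul_g hw x)).sub
    hR).const_mul lam |>.const_sub c |>.sub
    ((hasDerivAt_gInvIntegral x).const_mul β)).congr_deriv ?_
  field_simp [(g_pos x).ne']
  ring

lemma contDiffOn_profile (hw : Continuous w) {s : Set ℝ} (hs : IsOpen s)
    (hg : ContDiffOn ℝ 1 g s) : ContDiffOn ℝ 2 (profile w c lam β) s := by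
  have hP : ContDiff ℝ 1 fun y => ∫ t in (0 : ℝ)..y, w t * g t := by
    rw [contDiff_one_iff_deriv]
    refine ⟨fun x => (hasDerivAt_integral_mul_g hw x).differentiableAt, ?_⟩
    rw [funext fun x => (hasDerivAt_integral_mul_g hw x).deriv]
    exact hw.mul continuous_g
  rw [show (2 : WithTop ℕ∞) = 1 + 1 from rfl, contDiffOn_succ_iff_deriv_of_isOpen hs]
  refine ⟨fun x _ => (hasDerivAt_profile hw x).differentiableAt.differentiableWithinAt,
    by simp, ?_⟩
  rw [funext fun x => (hasDerivAt_profile (c := c) (lam := lam) (β := β) hw x).deriv]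
  exact (((contDiffOn_const (c := lam)).mul hP.contDiffOn).add contDiffOn_const).neg.div hg
    fun x _ => (g_pos x).ne'

lemma hasDerivAt_g_mul_deriv_of_eqOn_profile {u : ℝ → ℝ} (hw : Continuous w)
    (hu : EqOn u (profile w c lam β) (Ioi 0)) (hwu : EqOn w u (Ioi 0)) {x : ℝ} (hx : 0 < x) :
    HasDerivAt (fun y => g y * deriv u y) (-lam * g x * u x) x := by
  refine ((((hasDerivAt_integral_mul_g hw x).const_mul lam).add_const β).neg.congr_deriv
    (by rw [hwu hx]; ring)).congr_of_eventuallyEq ?_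
  filter_upwards [Ioi_mem_nhds hx] with y hy
  have hy' : u =ᶠ[𝓝 y] profile w c lam β := eventually_of_mem (Ioi_mem_nhds hy) hu
  rw [hy'.deriv_eq, (hasDerivAt_profile hw y).deriv]
  field_simp [(g_pos y).ne']
  rfl

end Profile

lemma eqOn_comp_max (u : ℝ → ℝ) : EqOn (fun x => u (max x 0)) u (Ici 0) :=
  fun x hx => by simp only [max_eq_left (mem_Ici.mp hx)]

theorem eqOn_profile_of_minimizer {q α μ : ℝ} (hq : 1 < q) {u u' : ℝ → ℝ} (hu : InH1g u u')
    (hu0 : u 0 ≠ 0) (hm0 : 0 < massg u) (hm : massg u ≤ μ)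
    (hmin : energyg q α u u' = sInf (levelSetg q α μ)) (hbdd : BddBelow (levelSetg q α μ)) :
    EqOn u (profile (fun x => u (max x 0)) (u 0)
      (((∫ x in Ioi (0 : ℝ), u' x ^ 2 * g x) - α * |u 0| ^ q) / massg u)
      (α * |u 0| ^ (q - 2) * u 0)) (Ici 0) := by
  intro b hb
  have hw := hu.continuous_comp_max hu0
  have huw : EqOn u (fun x => u (max x 0)) (Ioi 0) :=
    ((eqOn_comp_max u).mono Ioi_subset_Ici_self).symm
  have h := weak_euler_lagrange hq hu (fun _ _ => hu.intervalIntegrable hu0) hm0 hm hmin hbdd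
    (inH1g_testFn hb)
    (fun _ _ _ _ => (integrable_testFnDeriv b).intervalIntegrable)
    (integrableOn_mul_testFn_mul_g hw huw)
    (integrableOn_mul_testFnDeriv_mul_g (hu.integrableOn_Ioc hu0 b))
  rw [integral_mul_testFnDeriv_mul_g hu hb, integral_mul_testFn_mul_g hw huw hb,
    testFn_zero hb] at h
  rw [profile]
  linarith

lemma regularity_of_eqOn_profile {u w : ℝ → ℝ} {c lam β : ℝ} (hw : Continuous w)
    (hwu : EqOn w u (Ioi 0)) (hu : EqOn u (profile w c lam β) (Ici 0)) :
    ContDiffOn ℝ 2 u (Ioo 0 1) ∧ ContDiffOn ℝ 2 u (Ioi 1) ∧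
      (∀ x ∈ Ioo (0 : ℝ) 1 ∪ Ioi 1,
        HasDerivAt (fun y => g y * deriv u y) (-lam * g x * u x) x) ∧
      HasDerivWithinAt u (-β / 4) (Ici 0) 0 := by
  have hpos : ∀ x ∈ Ioo (0 : ℝ) 1 ∪ Ioi 1, 0 < x := by
    rintro x (hx | hx)
    exacts [hx.1, zero_lt_one.trans hx]
  refine ⟨?_, ?_, fun x hx => ?_, ?_⟩
  · exact (contDiffOn_profile hw isOpen_Ioo ((contDiffOn_g_Iio 1).mono Ioo_subset_Iio_self)).congr
      fun x hx => hu (mem_Ici.mpr (hpos x (Or.inl hx)).le)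
  · exact (contDiffOn_profile hw isOpen_Ioi (contDiffOn_g_Ioi 1)).congr
      fun x hx => hu (mem_Ici.mpr (hpos x (Or.inr hx)).le)
  · exact hasDerivAt_g_mul_deriv_of_eqOn_profile hw (hu.mono Ioi_subset_Ici_self) hwu (hpos x hx)
  · refine ((hasDerivAt_profile hw 0).hasDerivWithinAt.congr hu (hu self_mem_Ici)).congr_deriv ?_
    simp [g_zero, neg_div]

theorem stmt13_general (q α μ : ℝ) (hq : 2 < q)
    (u u' : ℝ → ℝ) (hu : InH1g u u') (hm0 : 0 < massg u) (hm : massg u ≤ μ)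
    (hmin : energyg q α u u' = sInf (levelSetg q α μ))
    (hneg : sInf (levelSetg q α μ) < 0) :
    ∃ lam : ℝ,
      ContDiffOn ℝ 2 u (Ioo 0 1) ∧ ContDiffOn ℝ 2 u (Ioi 1) ∧
      (∀ x ∈ Ioo (0 : ℝ) 1 ∪ Ioi 1,
        HasDerivAt (fun y => g y * deriv u y) (lam * g x * u x) x) ∧
      ∃ m : ℝ, HasDerivWithinAt u m (Ici 0) 0 ∧
        4 * m = -α * |u 0| ^ (q - 2) * u 0 := by
  have hbdd : BddBelow (levelSetg q α μ) := by
    by_contra h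
    exact hneg.ne (Real.sInf_of_not_bddBelow h)
  have hu0 : u 0 ≠ 0 := by
    intro h
    have hK : 0 ≤ ∫ x in Ioi (0 : ℝ), u' x ^ 2 * g x :=
      setIntegral_nonneg measurableSet_Ioi fun x _ => mul_nonneg (sq_nonneg _) (g_pos x).le
    have hE := hmin ▸ hneg
    simp only [energyg, h, abs_zero, Real.zero_rpow (by linarith : q ≠ 0), mul_zero,
      sub_zero] at hE
    linarith
  obtain ⟨hC₁, hC₂, hflux, hderiv⟩ := regularity_of_eqOn_profile (hu.continuous_comp_max hu0)
    ((eqOn_comp_max u).mono Ioi_subset_Ici_self)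
    (eqOn_profile_of_minimizer (by linarith) hu hu0 hm0 hm hmin hbdd)
  exact ⟨_, hC₁, hC₂, hflux, _, hderiv, by ring⟩

/-- Euler–Lagrange equation: a minimizer `u ∈ X_μ` with `Ẽ_{q,α}(u) = 𝓔̃_{q,α}(μ) < 0`
is `C²` on `(0,1)` and on `(1,∞)`, satisfies `(g u')' = λ g u` there for some
`λ ∈ ℝ`, and its right derivative at `0` satisfies `4u'(0⁺) = −α|u(0)|^{q−2}u(0)`. -/
theorem stmt13 (q α μ : ℝ) (hq : 2 < q) (hq' : q < 4) (hα : 0 < α) (hμ : 0 < μ)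
    (u u' : ℝ → ℝ) (hu : InH1g u u') (hm0 : 0 < massg u) (hm : massg u ≤ μ)
    (hmin : energyg q α u u' = sInf (levelSetg q α μ))
    (hneg : sInf (levelSetg q α μ) < 0) :
    ∃ lam : ℝ,
      ContDiffOn ℝ 2 u (Ioo 0 1) ∧ ContDiffOn ℝ 2 u (Ioi 1) ∧
      (∀ x ∈ Ioo (0 : ℝ) 1 ∪ Ioi 1,
        HasDerivAt (fun y => g y * deriv u y) (lam * g x * u x) x) ∧
      ∃ m : ℝ, HasDerivWithinAt u m (Ici 0) 0 ∧
        4 * m = -α * |u 0| ^ (q - 2) * u 0 :=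
  stmt13_general q α μ hq u u' hu hm0 hm hmin hneg
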